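/- Let Γ be a group acting faithfully on the right by bijections on a set X, let N be a normal subgroup of Γ, and suppose there exist γ ∈ N and a subset U ⊆ X with U ∩ (U·γ) = ∅. Then [R_Γ(U), R_Γ(U)] ≤ N. -/

import Mathlib

open MulOpposite

/-- Pointwise stabilizer of a set `A ⊆ X` for a right action of `G` on `X`:
`{g ∈ G : x·g = x for all x ∈ A}`. -/
def pointwiseStabilizer (G : Type*) {X : Type*} [Group G] [MulAction Gᵐᵒᵖ X] (A : Set X) :
    Subgroup G where
  carrier := {g : G | ∀ x ∈ A, op g • x = x}
  one_mem' := by intro x _; simp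
  mul_mem' := by
    intro g h hg hh x hx
    have h1 : op (g * h) • x = op h • (op g • x) := by
      rw [op_mul, mul_smul]
    rw [h1, hg x hx, hh x hx]
  inv_mem' := by
    intro g hg x hx
    have h1 : op g⁻¹ • (op g • x) = x := by
      rw [op_inv]; exact inv_smul_smul _ _
    rw [hg x hx] at h1
    exact h1

/-- Rigid stabilizer `R_G(U) = {g ∈ G : x·g = x for all x ∈ X \ U}`. -/
def rigidStabilizer (G : Type*) {X : Type*} [Group G] [MulAction Gᵐᵒᵖ X] (U : Set X) :
    Subgroup G :=
  pointwiseStabilizer G Uᶜ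

/-!
Conjugating `b ∈ R_Γ(U)` by `γ` gives `c = γ⁻¹ b γ ∈ R_Γ(U·γ)`. Elements with disjoint supports
commute, so by faithfulness `a` commutes with `c` for every `a ∈ R_Γ(U)`. Since `γ ∈ N`, the
images of `b` and `c` in `Γ ⧸ N` coincide, hence `[a, b]` maps to `[a, c] = 1`.
-/

section RigidStabilizer

variable {G X : Type*} [Group G] [MulAction Gᵐᵒᵖ X] {U V : Set X} {a b : G}

theorem smul_eq_self_of_mem_rigidStabilizer (ha : a ∈ rigidStabilizer G U) {x : X}
    (hx : x ∉ U) : op a • x = x :=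
  ha x hx

theorem smul_mem_of_mem_rigidStabilizer (ha : a ∈ rigidStabilizer G U) {x : X} (hx : x ∈ U) :
    op a • x ∈ U := by
  by_contra hax
  have hfix := smul_eq_self_of_mem_rigidStabilizer (inv_mem ha) hax
  rw [op_inv, inv_smul_smul] at hfix
  exact hax (hfix ▸ hx)

theorem inv_mul_mul_mem_rigidStabilizer_image (g : G) (hb : b ∈ rigidStabilizer G U) :
    g⁻¹ * b * g ∈ rigidStabilizer G ((fun x : X => op g • x) '' U) := by
  intro x hx
  have hx' : op g⁻¹ • x ∉ U := fun h => hx ⟨_, h, by rw [op_inv]; exact smul_inv_smul _ _⟩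
  rw [op_mul, op_mul, mul_smul, mul_smul, smul_eq_self_of_mem_rigidStabilizer hb hx', op_inv,
    smul_inv_smul]

theorem smul_mul_comm_of_mem_rigidStabilizer_of_disjoint (ha : a ∈ rigidStabilizer G U)
    (hb : b ∈ rigidStabilizer G V) (hUV : Disjoint U V) (x : X) :
    op (a * b) • x = op (b * a) • x := by
  rw [op_mul, op_mul, mul_smul, mul_smul]
  by_cases hxU : x ∈ U
  · have haxU := smul_mem_of_mem_rigidStabilizer ha hxU
    rw [smul_eq_self_of_mem_rigidStabilizer hb (hUV.notMem_of_mem_left hxU),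
      smul_eq_self_of_mem_rigidStabilizer hb (hUV.notMem_of_mem_left haxU)]
  · rw [smul_eq_self_of_mem_rigidStabilizer ha hxU]
    by_cases hxV : x ∈ V
    · have hbxV := smul_mem_of_mem_rigidStabilizer hb hxV
      rw [smul_eq_self_of_mem_rigidStabilizer ha (hUV.notMem_of_mem_right hbxV)]
    · rw [smul_eq_self_of_mem_rigidStabilizer hb hxV, smul_eq_self_of_mem_rigidStabilizer ha hxU]

theorem commute_of_mem_rigidStabilizer_of_disjoint [FaithfulSMul Gᵐᵒᵖ X]
    (ha : a ∈ rigidStabilizer G U) (hb : b ∈ rigidStabilizer G V) (hUV : Disjoint U V) :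
    Commute a b :=
  op_injective <| eq_of_smul_eq_smul <| smul_mul_comm_of_mem_rigidStabilizer_of_disjoint ha hb hUV

end RigidStabilizer

open scoped commutatorElement in
theorem Subgroup.Normal.commutatorElement_mem_of_commute_conj {G : Type*} [Group G]
    {N : Subgroup G} (hN : N.Normal) {a b g : G} (hg : g ∈ N) (h : Commute a (g⁻¹ * b * g)) :
    ⁅a, b⁆ ∈ N := by
  have hg' : (g : G ⧸ N) = 1 := (QuotientGroup.eq_one_iff g).mpr hg
  rw [← QuotientGroup.eq_one_iff, ← QuotientGroup.mk'_apply, map_commutatorElement,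
    commutatorElement_eq_one_iff_commute]
  simpa [hg'] using h.map (QuotientGroup.mk' N)

/-- **Displacement version of the double commutator trick.**
If a group `Γ` acts faithfully on the right by bijections on a set `X`
(encoded as a left action of `Γᵐᵒᵖ`, so `x·g = op g • x`), `N` is a normal
subgroup of `Γ`, and there are `γ ∈ N` and `U ⊆ X` with `U ∩ U·γ = ∅`,
then `[R_Γ(U), R_Γ(U)] ≤ N`. -/
theorem double_commutator_displaced
    {Γ X : Type*} [Group Γ] [MulAction Γᵐᵒᵖ X]
    (hfaith : ∀ g : Γ, (∀ x : X, op g • x = x) → g = 1)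
    (N : Subgroup Γ) (hN : N.Normal)
    (γ : Γ) (hγ : γ ∈ N) (U : Set X)
    (hdisj : U ∩ ((fun x : X => op γ • x) '' U) = ∅) :
    ⁅rigidStabilizer Γ U, rigidStabilizer Γ U⁆ ≤ N := by
  have : FaithfulSMul Γᵐᵒᵖ X := ⟨fun {g h} hgh => unop_injective <| mul_inv_eq_one.mp <|
    hfaith _ fun x => by rw [op_mul, mul_smul, op_unop, op_inv, op_unop, hgh, inv_smul_smul]⟩
  rw [Subgroup.commutator_le]
  intro a ha b hb
  exact hN.commutatorElement_mem_of_commute_conj hγ <| commute_of_mem_rigidStabilizer_of_disjoint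
    ha (inv_mul_mul_mem_rigidStabilizer_image γ hb) (Set.disjoint_iff_inter_eq_empty.mpr hdisj)
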